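/- arXiv:1205.2926 — 10 statements merged into one kernel-verified Lean document; each statement's English description precedes it below -/
import Mathlib

section
/- Let β, p, W, T be integers with β > 0, 0 < p, 0 ≤ W, 0 ≤ T. Set W' = ⌊W·β/p⌋ and Q = ⌊W'·T/β⌋. Then the candidate remainder W·T − Q·p satisfies 0 ≤ W·T − Q·p and β·(W·T − Q·p) < T·p + β·p. -/
/-- Key quantitative estimate underlying Shoup's modular multiplication:
with `W' = ⌊W·β/p⌋` and `Q = ⌊W'·T/β⌋`, the candidate remainder `W·T − Q·p`
satisfies `0 ≤ W·T − Q·p` and `β·(W·T − Q·p) < T·p + β·p`. -/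
theorem shoup_candidate_remainder_estimate
    (β p W T W' Q : ℤ)
    (hβ : β > 0) (hp : 0 < p) (hW : 0 ≤ W) (hT : 0 ≤ T)
    (hW' : W' = W * β / p) (hQ : Q = W' * T / β) :
    0 ≤ W * T - Q * p ∧ β * (W * T - Q * p) < T * p + β * p := by
  have hW'0 : 0 ≤ W' := hW' ▸ Int.ediv_nonneg (mul_nonneg hW hβ.le) hp.le
  have e1 := Int.mul_ediv_add_emod (W * β) p
  have r1 := Int.emod_nonneg (W * β) (ne_of_gt hp)
  have r1' := Int.emod_lt_of_pos (W * β) hp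
  have e2 := Int.mul_ediv_add_emod (W' * T) β
  have r2 := Int.emod_nonneg (W' * T) (ne_of_gt hβ)
  have r2' := Int.emod_lt_of_pos (W' * T) hβ
  rw [← hW'] at e1
  rw [← hQ] at e2
  constructor
  · nlinarith [mul_nonneg hW'0 hT, mul_pos hβ hp]
  · nlinarith [mul_nonneg hW'0 hT, mul_pos hβ hp]
end

section
/- Let β, p, W, T be integers with β > 0, 0 < W < p, and 0 ≤ T < β. Set W' = ⌊W·β/p⌋ and Q = ⌊W'·T/β⌋. Then 0 ≤ W·T − Q·p < 2p; in particular W·T − Q·p is a representative of W·T modulo p lying in the interval [0, 2p). -/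
/-- Shoup's quotient estimate is off by at most one: for `0 < W < p` and
`0 ≤ T < β`, with `W' = ⌊W·β/p⌋` and `Q = ⌊W'·T/β⌋`, the candidate remainder
`W·T − Q·p` lies in `[0, 2p)`, hence is a representative of `W·T` mod `p`. -/
theorem shoup_candidate_remainder_in_Ico
    (β p W T W' Q : ℤ)
    (hβ : β > 0) (hW0 : 0 < W) (hWp : W < p) (hT0 : 0 ≤ T) (hTβ : T < β)
    (hW' : W' = W * β / p) (hQ : Q = W' * T / β) :
    0 ≤ W * T - Q * p ∧ W * T - Q * p < 2 * p ∧
      W * T - Q * p ≡ W * T [ZMOD p] := by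
  have hp : (0:ℤ) < p := hW0.trans hWp
  have h1 : W' * p ≤ W * β := hW' ▸ Int.ediv_mul_le (W * β) hp.ne'
  have h2 : W * β < (W' + 1) * p := hW' ▸ Int.lt_ediv_add_one_mul_self _ hp
  have h3 : Q * β ≤ W' * T := hQ ▸ Int.ediv_mul_le (W' * T) hβ.ne'
  have h4 : W' * T < (Q + 1) * β := hQ ▸ Int.lt_ediv_add_one_mul_self _ hβ
  refine ⟨?_, ?_, ?_⟩
  · nlinarith
  · nlinarith
  · have : W * T - Q * p = W * T + (-Q) * p := by ring
    simp [Int.ModEq, this, Int.add_mul_emod_self_left]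
end

section
/- Let β, p, W, T be integers with 0 < 2p < β, 0 < W < p, and 0 ≤ T < β. Set W' = ⌊W·β/p⌋, Q = ⌊W'·T/β⌋, Y₀ = (W·T − Q·p) mod β, and Y' = Y₀ − p if Y₀ ≥ p, else Y' = Y₀. Then Y' = (W·T) mod p; in particular 0 ≤ Y' < p. -/
/-- Full correctness of Shoup's modular multiplication routine: quotient
estimate, low-word subtraction mod `β`, and one conditional subtraction yield
exactly `(W·T) mod p`, for any input `T` in `[0, β)`. -/
theorem shoup_modmul_correct
    (β p W T W' Q Y₀ Y' : ℤ)
    (hp : 0 < 2 * p) (hpβ : 2 * p < β) (hW0 : 0 < W) (hWp : W < p)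
    (hT0 : 0 ≤ T) (hTβ : T < β)
    (hW' : W' = W * β / p) (hQ : Q = W' * T / β)
    (hY₀ : Y₀ = (W * T - Q * p) % β)
    (hY' : Y' = if Y₀ ≥ p then Y₀ - p else Y₀) :
    Y' = (W * T) % p ∧ 0 ≤ Y' ∧ Y' < p := by
  have hp' : 0 < p := by linarith
  have hβ : 0 < β := by linarith
  have h1 := Int.mul_ediv_add_emod (W * β) p
  have h2 := Int.emod_nonneg (W * β) (ne_of_gt hp')
  have h3 := Int.emod_lt_of_pos (W * β) hp'
  have h4 := Int.mul_ediv_add_emod (W' * T) β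
  have h5 := Int.emod_nonneg (W' * T) (ne_of_gt hβ)
  have h6 := Int.emod_lt_of_pos (W' * T) hβ
  set r1 := W * β % p with hr1
  set r2 := W' * T % β with hr2
  rw [← hW'] at h1
  rw [← hQ] at h4
  -- key identity: (W*T - Q*p) * β = T * r1 + r2 * p
  have key : (W * T - Q * p) * β = T * r1 + r2 * p := by nlinarith [h1, h4]
  have hR0 : 0 ≤ W * T - Q * p := by
    nlinarith [mul_nonneg hT0 h2, mul_nonneg h5 (le_of_lt hp')]
  have hR2p : W * T - Q * p < 2 * p := by
    nlinarith [mul_le_mul_of_nonneg_left (by linarith : r1 ≤ p - 1) hT0,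
      mul_le_mul_of_nonneg_right (by linarith : r2 ≤ β - 1) (le_of_lt hp')]
  have hRβ : W * T - Q * p < β := by linarith
  have hY₀' : Y₀ = W * T - Q * p := by
    rw [hY₀, Int.emod_eq_of_lt hR0 hRβ]
  have hmod : (W * T) % p = (W * T - Q * p) % p := by
    simp [Int.sub_emod, Int.mul_emod_left]
  by_cases hc : Y₀ ≥ p
  · have : Y' = Y₀ - p := by rw [hY']; simp [hc]
    refine ⟨?_, by omega, by omega⟩
    rw [this, hY₀', hmod]
    rw [show W * T - Q * p = (W * T - Q * p - p) + 1 * p by ring,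
      Int.add_mul_emod_self_right]
    rw [Int.emod_eq_of_lt (by omega) (by omega)]; ring
  · have : Y' = Y₀ := by rw [hY']; simp [hc]
    refine ⟨?_, by omega, by omega⟩
    rw [this, hY₀', hmod, Int.emod_eq_of_lt (by omega) (by omega)]
end

section
/- (Correctness of the NTL butterfly, Algorithm 2.) Let β, p, W, X, Y be integers with 0 < 2p < β, 0 < W < p, 0 ≤ X < p, and 0 ≤ Y < p. Set W' = ⌊W·β/p⌋. Define X' = X + Y − p if X + Y ≥ p, else X' = X + Y; define T = X − Y + p if X − Y < 0, else T = X − Y; define Q = ⌊W'·T/β⌋, Y₀ = (W·T − Q·p) mod β, and Y' = Y₀ − p if Y₀ ≥ p, else Y' = Y₀. Then X' = (X + Y) mod p and Y' = (W·(X − Y)) mod p. -/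
lemma ntl_mod_eq_of (p a b k : ℤ) (h : a = b + p * k) (h0 : 0 ≤ b) (h1 : b < p) :
    a % p = b := by
  rw [h, Int.add_mul_emod_self_left, Int.emod_eq_of_lt h0 h1]

/-- Correctness of the NTL butterfly (Algorithm 2):
`(X, Y) ↦ (X + Y mod p, W·(X − Y) mod p)` with inputs in `[0, p)`. -/
theorem ntl_butterfly_correct
    (β p W X Y W' X' T Q Y₀ Y' : ℤ)
    (hp : 0 < 2 * p) (hpβ : 2 * p < β) (hW0 : 0 < W) (hWp : W < p)
    (hX0 : 0 ≤ X) (hXp : X < p) (hY0 : 0 ≤ Y) (hYp : Y < p)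
    (hW' : W' = W * β / p)
    (hX' : X' = if X + Y ≥ p then X + Y - p else X + Y)
    (hT : T = if X - Y < 0 then X - Y + p else X - Y)
    (hQ : Q = W' * T / β)
    (hY₀ : Y₀ = (W * T - Q * p) % β)
    (hY' : Y' = if Y₀ ≥ p then Y₀ - p else Y₀) :
    X' = (X + Y) % p ∧ Y' = (W * (X - Y)) % p := by
  have hp0 : 0 < p := by linarith
  have hβ0 : 0 < β := by linarith
  -- first component
  have hfst : X' = (X + Y) % p := by
    rw [hX']
    split_ifs with h
    · exact (ntl_mod_eq_of p (X + Y) (X + Y - p) 1 (by ring) (by linarith) (by linarith)).symm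
    · exact (ntl_mod_eq_of p (X + Y) (X + Y) 0 (by ring) (by linarith) (by linarith)).symm
  refine ⟨hfst, ?_⟩
  -- T facts
  have hT0 : 0 ≤ T := by rw [hT]; split_ifs <;> linarith
  have hTp : T < p := by rw [hT]; split_ifs <;> linarith
  obtain ⟨k, hk⟩ : ∃ k, T = X - Y + p * k := by
    rw [hT]; split_ifs
    · exact ⟨1, by ring⟩
    · exact ⟨0, by ring⟩
  -- r and s
  set r := W * β % p with hr
  have hrdef : W * β = p * W' + r := by rw [hW', hr]; exact (Int.mul_ediv_add_emod _ _).symm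
  have hr0 : 0 ≤ r := Int.emod_nonneg _ (by linarith)
  have hrp : r < p := Int.emod_lt_of_pos _ hp0
  set s := W' * T % β with hs
  have hsdef : W' * T = β * Q + s := by rw [hQ, hs]; exact (Int.mul_ediv_add_emod _ _).symm
  have hs0 : 0 ≤ s := Int.emod_nonneg _ (by linarith)
  have hsβ : s < β := Int.emod_lt_of_pos _ hβ0
  have key : β * (W * T - Q * p) = s * p + r * T := by
    linear_combination T * hrdef + p * hsdef
  have h0 : 0 ≤ W * T - Q * p := by
    nlinarith [mul_nonneg hs0 hp0.le, mul_nonneg hr0 hT0]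
  have h2p : W * T - Q * p < 2 * p := by
    nlinarith [mul_lt_mul_of_pos_right hsβ hp0, mul_le_mul_of_nonneg_left hTp.le hr0,
      mul_le_mul_of_nonneg_right hrp.le hT0, mul_lt_mul_of_pos_left hpβ hp0]
  have hY₀eq : Y₀ = W * T - Q * p := by
    rw [hY₀, Int.emod_eq_of_lt h0 (by linarith)]
  rw [hY']
  split_ifs with h
  · exact (ntl_mod_eq_of p (W * (X - Y)) (Y₀ - p) (Q - W * k + 1) (by
      rw [hY₀eq, hk]; ring) (by linarith) (by linarith [hY₀eq, h2p])).symm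
  · exact (ntl_mod_eq_of p (W * (X - Y)) Y₀ (Q - W * k) (by
      rw [hY₀eq, hk]; ring) (by linarith [hY₀eq, h0]) (by linarith)).symm
end

section
/- (Correctness of the modified Shoup butterfly, Algorithm 3.) Let β, p, W, X, Y be integers with 0 < 4p < β, 0 < W < p, 0 ≤ X < 2p, and 0 ≤ Y < 2p. Set W' = ⌊W·β/p⌋. Define X' = X + Y − 2p if X + Y ≥ 2p, else X' = X + Y; define T = X − Y + 2p, Q = ⌊W'·T/β⌋, and Y' = (W·T − Q·p) mod β. Then X' ≡ X + Y (mod p) with 0 ≤ X' < 2p, and Y' ≡ W·(X − Y) (mod p) with 0 ≤ Y' < 2p. -/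
/-- Correctness of the modified Shoup butterfly (Algorithm 3), using the
redundant representation of residues mod `p` by integers in `[0, 2p)`. -/
theorem modified_shoup_butterfly_correct
    (β p W X Y W' X' T Q Y' : ℤ)
    (hp : 0 < 4 * p) (hpβ : 4 * p < β) (hW0 : 0 < W) (hWp : W < p)
    (hX0 : 0 ≤ X) (hX2p : X < 2 * p) (hY0 : 0 ≤ Y) (hY2p : Y < 2 * p)
    (hW' : W' = W * β / p)
    (hX' : X' = if X + Y ≥ 2 * p then X + Y - 2 * p else X + Y)
    (hT : T = X - Y + 2 * p)
    (hQ : Q = W' * T / β)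
    (hY' : Y' = (W * T - Q * p) % β) :
    (X' ≡ X + Y [ZMOD p] ∧ 0 ≤ X' ∧ X' < 2 * p) ∧
      (Y' ≡ W * (X - Y) [ZMOD p] ∧ 0 ≤ Y' ∧ Y' < 2 * p) := by
  have hp0 : 0 < p := by linarith
  have hβ0 : 0 < β := by linarith
  have hT0 : 0 < T := by omega
  have hTβ : T < β := by omega
  set rW := W * β % p with hrW
  have e1 : p * W' + rW = W * β := by rw [hW', hrW]; exact Int.mul_ediv_add_emod _ _
  have hrW0 : 0 ≤ rW := Int.emod_nonneg _ hp0.ne'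
  have hrWp : rW < p := Int.emod_lt_of_pos _ hp0
  set rQ := W' * T % β with hrQ
  have e2 : β * Q + rQ = W' * T := by rw [hQ, hrQ]; exact Int.mul_ediv_add_emod _ _
  have hrQ0 : 0 ≤ rQ := Int.emod_nonneg _ hβ0.ne'
  have hrQβ : rQ < β := Int.emod_lt_of_pos _ hβ0
  -- key identity: β * (W*T - Q*p) = T * rW + rQ * p
  have key : β * (W * T - Q * p) = T * rW + rQ * p := by nlinarith [e1, e2]
  have hr0 : 0 ≤ W * T - Q * p := by nlinarith
  have hr2p : W * T - Q * p < 2 * p := by nlinarith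
  have hY'eq : Y' = W * T - Q * p := by
    rw [hY']; exact Int.emod_eq_of_lt hr0 (by linarith)
  refine ⟨⟨?_, ?_, ?_⟩, ?_, ?_, ?_⟩
  · rw [hX']; split_ifs with h
    · exact (Int.modEq_iff_dvd.mpr ⟨2, by ring⟩)
    · rfl
  · omega
  · omega
  · rw [hY'eq]
    exact Int.modEq_iff_dvd.mpr ⟨Q - 2 * W, by rw [hT]; ring⟩
  · omega
  · omega
end

section
/- (Correctness of the modified inverse butterfly, Algorithm 4.) Let β, p, W, X, Y be integers with 0 < 4p < β, 0 < W < p, 0 ≤ X < 4p, and 0 ≤ Y < 4p. Set W' = ⌊W·β/p⌋. Define X₁ = X − 2p if X ≥ 2p, else X₁ = X; define Q = ⌊W'·Y/β⌋, T = (W·Y − Q·p) mod β, X' = X₁ + T, and Y' = X₁ − T + 2p. Then X' ≡ X + W·Y (mod p) with 0 ≤ X' < 4p, and Y' ≡ X − W·Y (mod p) with 0 ≤ Y' < 4p. -/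
/-- Correctness of the modified inverse butterfly (Algorithm 4):
`(X, Y) ↦ (X + W·Y, X − W·Y)` mod `p`, with residues kept in the redundant
representation by integers in `[0, 4p)`. -/
theorem modified_inverse_butterfly_correct
    (β p W X Y W' X₁ Q T X' Y' : ℤ)
    (hp : 0 < 4 * p) (hpβ : 4 * p < β) (hW0 : 0 < W) (hWp : W < p)
    (hX0 : 0 ≤ X) (hX4p : X < 4 * p) (hY0 : 0 ≤ Y) (hY4p : Y < 4 * p)
    (hW' : W' = W * β / p)
    (hX₁ : X₁ = if X ≥ 2 * p then X - 2 * p else X)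
    (hQ : Q = W' * Y / β)
    (hT : T = (W * Y - Q * p) % β)
    (hX' : X' = X₁ + T)
    (hY' : Y' = X₁ - T + 2 * p) :
    (X' ≡ X + W * Y [ZMOD p] ∧ 0 ≤ X' ∧ X' < 4 * p) ∧
      (Y' ≡ X - W * Y [ZMOD p] ∧ 0 ≤ Y' ∧ Y' < 4 * p) := by
  have hp' : 0 < p := by linarith
  have hβ : 0 < β := by linarith
  set r := W * β % p with hrdef
  have hr0 : 0 ≤ r := Int.emod_nonneg _ hp'.ne'
  have hrp : r < p := Int.emod_lt_of_pos _ hp'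
  have hdiv : p * W' + r = W * β := by rw [hW', hrdef]; exact Int.mul_ediv_add_emod _ _
  set s := W' * Y % β with hsdef
  have hs0 : 0 ≤ s := Int.emod_nonneg _ hβ.ne'
  have hsβ : s < β := Int.emod_lt_of_pos _ hβ
  have hdiv2 : β * Q + s = W' * Y := by rw [hQ, hsdef]; exact Int.mul_ediv_add_emod _ _
  have hkey : β * (W * Y - Q * p) = r * Y + p * s := by linear_combination -Y * hdiv - p * hdiv2
  have h0 : 0 ≤ W * Y - Q * p := by
    nlinarith [mul_nonneg hr0 hY0, mul_nonneg hp'.le hs0]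
  have h2 : W * Y - Q * p < 2 * p := by
    nlinarith [mul_lt_mul'' hrp hY4p hr0 hY0, mul_lt_mul_of_pos_left hsβ hp']
  have hTeq : T = W * Y - Q * p := by
    rw [hT]; exact Int.emod_eq_of_lt h0 (by linarith)
  have hX₁0 : 0 ≤ X₁ := by rw [hX₁]; split <;> omega
  have hX₁2p : X₁ < 2 * p := by rw [hX₁]; split <;> omega
  have hdvd : p ∣ X - X₁ := by
    rw [hX₁]; split
    · exact ⟨2, by ring⟩
    · exact ⟨0, by ring⟩
  constructor
  · refine ⟨?_, by omega, by omega⟩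
    refine Int.modEq_iff_dvd.mpr ?_
    have h : X + W * Y - X' = (X - X₁) + Q * p := by rw [hX', hTeq]; ring
    rw [h]; exact dvd_add hdvd ⟨Q, by ring⟩
  · refine ⟨?_, by omega, by omega⟩
    refine Int.modEq_iff_dvd.mpr ?_
    have h : X - W * Y - Y' = (X - X₁) + (-Q - 2) * p := by rw [hY', hTeq]; ring
    rw [h]; exact dvd_add hdvd ⟨-Q - 2, by ring⟩
end

section
/- (Correctness of the modified Montgomery butterfly, Algorithm 5.) Let β, p, W, J, X, Y be integers with 0 < 4p < β, gcd(p, β) = 1, 0 < W < p, 0 ≤ J < β and p·J ≡ 1 (mod β), 0 ≤ X < 2p, and 0 ≤ Y < 2p. Set W' = (β·W) mod p. Define X' = X + Y − 2p if X + Y ≥ 2p, else X' = X + Y; define T = X − Y + 2p, R₁ = ⌊W'·T/β⌋, R₀ = (W'·T) mod β, Q = (R₀·J) mod β, H = ⌊Q·p/β⌋, and Y' = R₁ − H + p. Then X' ≡ X + Y (mod p) with 0 ≤ X' < 2p, and Y' ≡ W·(X − Y) (mod p) with 0 ≤ Y' < 2p. -/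
/-- Correctness of the modified Montgomery butterfly (Algorithm 5), with the
precomputed Montgomery representative `W' = β·W mod p` and `J = p⁻¹ mod β`,
and residues kept in the redundant representation by integers in `[0, 2p)`. -/
theorem modified_montgomery_butterfly_correct
    (β p W J X Y W' X' T R₁ R₀ Q H Y' : ℤ)
    (hp : 0 < 4 * p) (hpβ : 4 * p < β) (hgcd : Int.gcd p β = 1)
    (hW0 : 0 < W) (hWp : W < p)
    (hJ0 : 0 ≤ J) (hJβ : J < β) (hJ : p * J ≡ 1 [ZMOD β])
    (hX0 : 0 ≤ X) (hX2p : X < 2 * p) (hY0 : 0 ≤ Y) (hY2p : Y < 2 * p)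
    (hW' : W' = (β * W) % p)
    (hX' : X' = if X + Y ≥ 2 * p then X + Y - 2 * p else X + Y)
    (hT : T = X - Y + 2 * p)
    (hR₁ : R₁ = W' * T / β) (hR₀ : R₀ = (W' * T) % β)
    (hQ : Q = (R₀ * J) % β) (hH : H = Q * p / β)
    (hY' : Y' = R₁ - H + p) :
    (X' ≡ X + Y [ZMOD p] ∧ 0 ≤ X' ∧ X' < 2 * p) ∧
      (Y' ≡ W * (X - Y) [ZMOD p] ∧ 0 ≤ Y' ∧ Y' < 2 * p) := by
  have hp' : 0 < p := by linarith
  have hβ : 0 < β := by linarith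
  constructor
  · subst hX'
    split_ifs with h
    · exact ⟨Int.ModEq.symm (Int.modEq_iff_dvd.2 ⟨-2, by ring⟩), by linarith, by linarith⟩
    · exact ⟨Int.ModEq.refl _, by linarith, by linarith⟩
  · -- Y' part
    have hW'0 : 0 ≤ W' := hW' ▸ Int.emod_nonneg _ (ne_of_gt hp')
    have hW'p : W' < p := hW' ▸ Int.emod_lt_of_pos _ hp'
    have hT0 : 0 < T := by linarith
    have hT4 : T < 4 * p := by linarith
    have hWT0 : 0 ≤ W' * T := mul_nonneg hW'0 hT0.le
    have hWT : W' * T < p * β := by nlinarith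
    have hR₁0 : 0 ≤ R₁ := hR₁ ▸ Int.ediv_nonneg hWT0 hβ.le
    have hR₁p : R₁ < p := by
      rw [hR₁, Int.ediv_lt_iff_lt_mul hβ]; linarith
    have hR₀0 : 0 ≤ R₀ := hR₀ ▸ Int.emod_nonneg _ (ne_of_gt hβ)
    have hR₀β : R₀ < β := hR₀ ▸ Int.emod_lt_of_pos _ hβ
    have hQ0 : 0 ≤ Q := hQ ▸ Int.emod_nonneg _ (ne_of_gt hβ)
    have hQβ : Q < β := hQ ▸ Int.emod_lt_of_pos _ hβ
    have hH0 : 0 ≤ H := hH ▸ Int.ediv_nonneg (mul_nonneg hQ0 hp'.le) hβ.le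
    have hHp : H < p := by
      rw [hH, Int.ediv_lt_iff_lt_mul hβ]; nlinarith
    -- Q * p ≡ R₀ (mod β), so Q*p % β = R₀
    have hQm : Q ≡ R₀ * J [ZMOD β] := by
      rw [hQ]; exact (Int.emod_emod_of_dvd _ dvd_rfl)
    have hQp : Q * p ≡ R₀ [ZMOD β] := by
      calc Q * p ≡ R₀ * J * p [ZMOD β] := hQm.mul_right p
        _ = R₀ * (p * J) := by ring
        _ ≡ R₀ * 1 [ZMOD β] := Int.ModEq.mul_left R₀ hJ
        _ = R₀ := by ring
    have hQpmod : Q * p % β = R₀ := by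
      have := hQp.eq  -- Q*p % β = R₀ % β
      rw [Int.ModEq] at hQp
      rw [hQp, Int.emod_eq_of_lt hR₀0 hR₀β]
    have e1 : W' * T = β * R₁ + R₀ := by
      rw [hR₁, hR₀]; linarith [Int.mul_ediv_add_emod (W' * T) β]
    have e2 : Q * p = β * H + R₀ := by
      rw [hH]
      have := Int.mul_ediv_add_emod (Q * p) β
      rw [hQpmod] at this; linarith
    have key : β * Y' = W' * T - Q * p + β * p := by
      rw [hY']; linear_combination e2 - e1
    obtain ⟨k, hk⟩ : p ∣ β * W - W' := by
      rw [hW']; exact Int.dvd_self_sub_of_emod_eq rfl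
    have hd : p ∣ β * (Y' - W * (X - Y)) :=
      ⟨-k * T + 2 * β * W - Q + β, by linear_combination key - T * hk + β * W * hT⟩
    have hco : IsCoprime p β := Int.isCoprime_iff_gcd_eq_one.mpr hgcd
    have hdvd : p ∣ Y' - W * (X - Y) := hco.dvd_of_dvd_mul_left hd
    refine ⟨?_, by linarith, by linarith⟩
    exact Int.ModEq.symm (Int.modEq_iff_dvd.2 hdvd)
end

section
/- (Montgomery reduction without final correction.) Let β, p, J, C be integers with β > 0, 0 < p, gcd(p, β) = 1, 0 ≤ J < β, p·J ≡ 1 (mod β), and 0 ≤ C < p·β. Set R₁ = ⌊C/β⌋, R₀ = C mod β, Q = (R₀·J) mod β, and H = ⌊Q·p/β⌋. Then Q·p = H·β + R₀, and the value Y' = R₁ − H + p satisfies 0 < Y' < 2p and β·Y' ≡ C (mod p) (that is, Y' ≡ C·β⁻¹ (mod p)). -/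
/-- Montgomery reduction without the final correction step: for
`0 ≤ C < p·β`, the value `Y' = R₁ − H + p` lies in `(0, 2p)` and satisfies
`β·Y' ≡ C (mod p)`, i.e. `Y'` represents `C·β⁻¹` mod `p`. -/
theorem montgomery_reduction_no_final_correction
    (β p J C R₁ R₀ Q H : ℤ)
    (hβ : β > 0) (hp : 0 < p) (hgcd : Int.gcd p β = 1)
    (hJ0 : 0 ≤ J) (hJβ : J < β) (hJ : p * J ≡ 1 [ZMOD β])
    (hC0 : 0 ≤ C) (hCpβ : C < p * β)
    (hR₁ : R₁ = C / β) (hR₀ : R₀ = C % β)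
    (hQ : Q = (R₀ * J) % β) (hH : H = Q * p / β) :
    Q * p = H * β + R₀ ∧
      0 < R₁ - H + p ∧ R₁ - H + p < 2 * p ∧
      β * (R₁ - H + p) ≡ C [ZMOD p] := by
  have hβ0 : β ≠ 0 := ne_of_gt hβ
  have hR0lo : 0 ≤ R₀ := hR₀ ▸ Int.emod_nonneg C hβ0
  have hR0hi : R₀ < β := hR₀ ▸ Int.emod_lt_of_pos C hβ
  have hQlo : 0 ≤ Q := hQ ▸ Int.emod_nonneg _ hβ0
  have hQhi : Q < β := hQ ▸ Int.emod_lt_of_pos _ hβ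
  -- Q * p ≡ R₀ mod β
  have hQmod : Q ≡ R₀ * J [ZMOD β] := by
    rw [hQ]; exact Int.emod_emod_of_dvd _ dvd_rfl
  have hQp : Q * p ≡ R₀ [ZMOD β] := by
    calc Q * p ≡ (R₀ * J) * p [ZMOD β] := hQmod.mul_right p
      _ = R₀ * (p * J) := by ring
      _ ≡ R₀ * 1 [ZMOD β] := hJ.mul_left R₀
      _ = R₀ := by ring
  have hmod : Q * p % β = R₀ := by
    rw [Int.ModEq] at hQp
    rw [hQp, Int.emod_eq_of_lt hR0lo hR0hi]
  have e := Int.mul_ediv_add_emod (Q * p) β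
  rw [← hH, hmod] at e
  have eq1 : Q * p = H * β + R₀ := by linarith [mul_comm β H]
  have hR1lo : 0 ≤ R₁ := hR₁ ▸ Int.ediv_nonneg hC0 hβ.le
  have hR1hi : R₁ < p := by
    rw [hR₁]
    exact Int.ediv_lt_of_lt_mul hβ (by linarith [mul_comm p β])
  have hHlo : 0 ≤ H := hH ▸ Int.ediv_nonneg (mul_nonneg hQlo hp.le) hβ.le
  have hHhi : H < p := by
    rw [hH]
    exact Int.ediv_lt_of_lt_mul hβ (by nlinarith)
  have hC' : β * R₁ + R₀ = C := by rw [hR₁, hR₀]; exact Int.mul_ediv_add_emod C β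
  refine ⟨eq1, by omega, by omega, ?_⟩
  have hd : C - β * (R₁ - H + p) = p * (Q - β) := by linear_combination -hC' - eq1
  exact Int.modEq_iff_dvd.mpr ⟨Q - β, hd⟩
end

section
/- (Möller's extension of Shoup multiplication to p < β/φ.) Let β, p, W, T be integers with β > 0, 0 < W < p, 0 ≤ T < p, and p² + p·β < β² (equivalently p < β/φ where φ = (1 + √5)/2). Set W' = ⌊W·β/p⌋ and Q = ⌊W'·T/β⌋. Then 0 ≤ W·T − Q·p < β and W·T − Q·p < 2p; consequently, setting Y₀ = (W·T − Q·p) mod β and Y' = Y₀ − p if Y₀ ≥ p, else Y' = Y₀, one has Y' = (W·T) mod p. -/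
/-- Möller's extension of Shoup multiplication to `p < β/φ` where `φ` is the
golden ratio (expressed by `p² + p·β < β²`): the candidate remainder
`W·T − Q·p` fits in a machine word and one conditional subtraction yields
`(W·T) mod p`. -/
theorem moller_shoup_modmul_correct
    (β p W T W' Q Y₀ Y' : ℤ)
    (hβ : β > 0) (hW0 : 0 < W) (hWp : W < p) (hT0 : 0 ≤ T) (hTp : T < p)
    (hφ : p ^ 2 + p * β < β ^ 2)
    (hW' : W' = W * β / p) (hQ : Q = W' * T / β)
    (hY₀ : Y₀ = (W * T - Q * p) % β)
    (hY' : Y' = if Y₀ ≥ p then Y₀ - p else Y₀) :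
    (0 ≤ W * T - Q * p ∧ W * T - Q * p < β) ∧
      W * T - Q * p < 2 * p ∧
      Y' = (W * T) % p := by
  have hp : 0 < p := hW0.trans hWp
  have hpβ : p < β := by nlinarith
  set e := (W * β) % p with he
  set r := (W' * T) % β with hr
  have he0 : 0 ≤ e := Int.emod_nonneg _ hp.ne'
  have hep : e < p := Int.emod_lt_of_pos _ hp
  have hr0 : 0 ≤ r := Int.emod_nonneg _ hβ.ne'
  have hrβ : r < β := Int.emod_lt_of_pos _ hβ
  have hdiv1 : p * W' + e = W * β := by
    rw [hW', he]; exact Int.mul_ediv_add_emod (W * β) p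
  have hdiv2 : β * Q + r = W' * T := by
    rw [hQ, hr]; exact Int.mul_ediv_add_emod (W' * T) β
  have key : β * (W * T - Q * p) = T * e + p * r := by
    linear_combination (-T) * hdiv1 + (-p) * hdiv2
  have hTe : T * e ≥ 0 := mul_nonneg hT0 he0
  have hR0 : 0 ≤ W * T - Q * p := by nlinarith
  have hRβ : W * T - Q * p < β := by nlinarith
  have hR2p : W * T - Q * p < 2 * p := by nlinarith
  refine ⟨⟨hR0, hRβ⟩, hR2p, ?_⟩
  have hY₀eq : Y₀ = W * T - Q * p := by
    rw [hY₀, Int.emod_eq_of_lt hR0 hRβ]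
  have hmod : (W * T) % p = (W * T - Q * p) % p := by
    have : W * T - Q * p = W * T + p * (-Q) := by ring
    rw [this, Int.add_mul_emod_self_left]
  rw [hY', hmod, hY₀eq]
  by_cases h : W * T - Q * p ≥ p
  · rw [if_pos h, eq_comm]
    have h2 : W * T - Q * p = (W * T - Q * p - p) + p * 1 := by ring
    rw [h2, Int.add_mul_emod_self_left,
      Int.emod_eq_of_lt (by linarith) (by linarith)]
    ring
  · rw [if_neg h, Int.emod_eq_of_lt hR0 (by linarith)]
end

section
/- Let β, p, W, T be integers with β > 0, 0 < W < p, and 0 ≤ T < β. Set W' = ⌊W·β/p⌋ and Q = ⌊W'·T/β⌋. Then Q ≤ ⌊W·T/p⌋ ≤ Q + 1; that is, the estimated quotient Q computed from the precomputed approximation W' differs from the true Euclidean quotient ⌊W·T/p⌋ by at most one, and never exceeds it. -/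
/-! Write `W' = ⌊Wβ/p⌋` and `Q = ⌊W'T/β⌋`, so `W'p ≤ Wβ < W'p + p` and `Qβ ≤ W'T < Qβ + β`.
Multiplying out, `Qβp ≤ W'Tp ≤ WTβ`, while `WTβ < W'Tp + pβ < (Q + 2)βp` because the rounding
error of `W'` is below `p` and `T < β`. Dividing by `βp` gives `Q ≤ WT/p < Q + 2`. -/

namespace Int

variable {β p : ℤ} (W T : ℤ)

theorem ediv_mul_ediv_le_mul_ediv (hβ : 0 < β) (hp : 0 < p) (hT : 0 ≤ T) :
    W * β / p * T / β ≤ W * T / p := by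
  set W' := W * β / p
  have hW' : W' * p ≤ W * β := Int.ediv_mul_le _ hp.ne'
  have hQ : W' * T / β * β ≤ W' * T := Int.ediv_mul_le _ hβ.ne'
  rw [Int.le_ediv_iff_mul_le hp]
  refine le_of_mul_le_mul_right ?_ hβ
  calc W' * T / β * p * β = W' * T / β * β * p := by ring
    _ ≤ W' * T * p := mul_le_mul_of_nonneg_right hQ hp.le
    _ = W' * p * T := by ring
    _ ≤ W * β * T := mul_le_mul_of_nonneg_right hW' hT
    _ = W * T * β := by ring

theorem mul_ediv_le_ediv_mul_ediv_add_one (hp : 0 < p) (hT : 0 ≤ T) (hTβ : T < β) :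
    W * T / p ≤ W * β / p * T / β + 1 := by
  set W' := W * β / p
  set Q := W' * T / β
  have hβ : 0 < β := hT.trans_lt hTβ
  have hW' : W * β < (W' + 1) * p := Int.lt_ediv_add_one_mul_self _ hp
  have hQ : W' * T < (Q + 1) * β := Int.lt_ediv_add_one_mul_self _ hβ
  suffices W * T < (Q + 2) * p by
    have := (Int.ediv_lt_iff_lt_mul hp).2 this
    omega
  refine lt_of_mul_lt_mul_right ?_ hβ.le
  calc W * T * β = W * β * T := by ring
    _ ≤ (W' * p + p) * T := by gcongr; linarith
    _ = W' * T * p + p * T := by ring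
    _ < (Q + 1) * β * p + p * β := by gcongr
    _ = (Q + 2) * p * β := by ring

end Int

/-- The estimated quotient `Q = ⌊W'·T/β⌋` computed from the precomputed
approximation `W' = ⌊W·β/p⌋` never exceeds the true Euclidean quotient
`⌊W·T/p⌋`, and differs from it by at most one. -/
theorem shoup_quotient_estimate
    (β p W T W' Q : ℤ)
    (hβ : β > 0) (hW0 : 0 < W) (hWp : W < p) (hT0 : 0 ≤ T) (hTβ : T < β)
    (hW' : W' = W * β / p) (hQ : Q = W' * T / β) :
    Q ≤ W * T / p ∧ W * T / p ≤ Q + 1 := by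
  have hp : 0 < p := hW0.trans hWp
  subst hW' hQ
  exact ⟨Int.ediv_mul_ediv_le_mul_ediv W T hβ hp hT0,
    Int.mul_ediv_le_ediv_mul_ediv_add_one W T hp hT0 hTβ⟩
end
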